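/- arXiv:1210.4988 — 5 statements merged into one kernel-verified Lean document; each statement's English description precedes it below -/
import Mathlib

section
/- Let E : ℤ → Type be a family of real Banach spaces, let λ ∈ (0,1), and for each k ∈ ℤ let A_k : E_k → E_{k+1} be a continuous linear map with ‖A_k‖ ≤ λ. Define 𝔸 on the space ℓ^∞ of bounded families v = (v_k)_{k∈ℤ} with v_k ∈ E_k (sup norm) by (𝔸v)_k = A_{k−1}(v_{k−1}). Then 𝔸 is a well-defined continuous linear operator on ℓ^∞ with ‖𝔸‖ ≤ λ, the operator id − 𝔸 is bijective with continuous inverse, and ‖(id − 𝔸)⁻¹‖ ≤ 1/(1−λ). -/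
open scoped ENNReal

/-!
The weighted shift `𝔸` moves the `k`-th entry to position `k + 1` through `A k`, so
`‖(𝔸 v)ₖ₊₁‖ ≤ λ ‖vₖ‖` and `‖𝔸‖ ≤ λ < 1`. In the Banach algebra of operators on the complete
space `ℓ^∞`, `id − 𝔸` is then invertible with inverse the Neumann series `∑ 𝔸ⁿ`, whose norm is
at most `∑ λⁿ = 1 / (1 − λ)`.
-/

section NeumannSeries

variable {𝕜 X : Type*} [NontriviallyNormedField 𝕜] [NormedAddCommGroup X] [NormedSpace 𝕜 X]
  [CompleteSpace X]

theorem ContinuousLinearMap.exists_equiv_eq_id_sub_of_norm_le {T : X →L[𝕜] X} {lam : ℝ}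
    (hT : ‖T‖ ≤ lam) (hlam : lam < 1) :
    ∃ Q : X ≃L[𝕜] X, (Q : X →L[𝕜] X) = ContinuousLinearMap.id 𝕜 X - T ∧
      ‖(Q.symm : X →L[𝕜] X)‖ ≤ 1 / (1 - lam) := by
  have hT1 : ‖T‖ < 1 := hT.trans_lt hlam
  refine ⟨ContinuousLinearEquiv.ofUnit (Units.oneSub T hT1), rfl, ?_⟩
  calc ‖∑' n : ℕ, T ^ n‖
      ≤ ‖(1 : X →L[𝕜] X)‖ - 1 + (1 - ‖T‖)⁻¹ := tsum_geometric_le_of_norm_lt_one T hT1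
    _ ≤ 1 - 1 + (1 - lam)⁻¹ := by
        gcongr
        exact ContinuousLinearMap.norm_id_le
    _ = 1 / (1 - lam) := by ring

end NeumannSeries

namespace lp

variable {𝕜 : Type*} [NontriviallyNormedField 𝕜] {E : ℤ → Type*} [∀ k, NormedAddCommGroup (E k)]
  [∀ k, NormedSpace 𝕜 (E k)] (A : ∀ k : ℤ, E k →L[𝕜] E (k + 1))

def weightedShiftFun (v : ∀ k, E k) (k : ℤ) : E k :=
  cast (congrArg E (Int.sub_add_cancel k 1)) (A (k - 1) (v (k - 1)))

@[simp]
theorem weightedShiftFun_add_one (v : ∀ k, E k) (k : ℤ) :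
    weightedShiftFun A v (k + 1) = A k (v k) := by
  -- generalize the index `k + 1 - 1` so that the cast can be eliminated
  suffices ∀ j (h : j + 1 = k + 1), cast (congrArg E h) (A j (v j)) = A k (v k) from
    this _ (Int.sub_add_cancel _ 1)
  intro j h
  obtain rfl : j = k := by omega
  rfl

theorem norm_weightedShiftFun_le {C : ℝ} (hA : ∀ k, ‖A k‖ ≤ C) (v : lp E ∞) (k : ℤ) :
    ‖weightedShiftFun A v k‖ ≤ C * ‖v‖ := by
  obtain ⟨j, rfl⟩ : ∃ j, k = j + 1 := ⟨k - 1, by ring⟩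
  rw [weightedShiftFun_add_one]
  exact (A j).le_of_opNorm_le_of_le (hA j) (norm_apply_le_norm ENNReal.top_ne_zero v j)

noncomputable def weightedShift (C : ℝ) (hA : ∀ k, ‖A k‖ ≤ C) : lp E ∞ →L[𝕜] lp E ∞ :=
  LinearMap.mkContinuous
    { toFun := fun v => ⟨weightedShiftFun A v,
        memℓp_infty ⟨C * ‖v‖, by rintro - ⟨k, rfl⟩; exact norm_weightedShiftFun_le A hA v k⟩⟩
      map_add' := fun v w => by
        ext k
        obtain ⟨j, rfl⟩ : ∃ j, k = j + 1 := ⟨k - 1, by ring⟩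
        simp only [coeFn_add, Pi.add_apply, weightedShiftFun_add_one, map_add]
      map_smul' := fun c v => by
        ext k
        obtain ⟨j, rfl⟩ : ∃ j, k = j + 1 := ⟨k - 1, by ring⟩
        simp only [coeFn_smul, Pi.smul_apply, weightedShiftFun_add_one, map_smul, RingHom.id_apply] }
    C fun v => norm_le_of_forall_le (mul_nonneg ((norm_nonneg _).trans (hA 0)) (norm_nonneg v))
      (norm_weightedShiftFun_le A hA v)

theorem weightedShift_apply_add_one (C : ℝ) (hA : ∀ k, ‖A k‖ ≤ C) (v : lp E ∞) (k : ℤ) :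
    (weightedShift A C hA v : ∀ k, E k) (k + 1) = A k ((v : ∀ k, E k) k) :=
  weightedShiftFun_add_one A v k

theorem norm_weightedShift_le (C : ℝ) (hA : ∀ k, ‖A k‖ ≤ C) : ‖weightedShift A C hA‖ ≤ C :=
  LinearMap.mkContinuous_norm_le _ ((norm_nonneg _).trans (hA 0)) _

end lp

theorem stmt_4_general
    (E : ℤ → Type*)
    [∀ k, NormedAddCommGroup (E k)] [∀ k, NormedSpace ℝ (E k)]
    [∀ k, CompleteSpace (E k)]
    (lam : ℝ) (hlam1 : lam < 1)
    (A : ∀ k : ℤ, E k →L[ℝ] E (k + 1)) (hA : ∀ k, ‖A k‖ ≤ lam) :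
    ∃ 𝔸 : lp E ∞ →L[ℝ] lp E ∞,
      (∀ (v : lp E ∞) (k : ℤ), (𝔸 v : ∀ k, E k) (k + 1) = A k ((v : ∀ k, E k) k)) ∧
      ‖𝔸‖ ≤ lam ∧
      ∃ Q : lp E ∞ ≃L[ℝ] lp E ∞,
        (Q : lp E ∞ →L[ℝ] lp E ∞) = ContinuousLinearMap.id ℝ (lp E ∞) - 𝔸 ∧
        ‖(Q.symm : lp E ∞ →L[ℝ] lp E ∞)‖ ≤ 1 / (1 - lam) :=
  ⟨lp.weightedShift A lam hA, lp.weightedShift_apply_add_one A lam hA,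
    lp.norm_weightedShift_le A lam hA,
    ContinuousLinearMap.exists_equiv_eq_id_sub_of_norm_le (lp.norm_weightedShift_le A lam hA) hlam1⟩

theorem stmt_4
    (E : ℤ → Type*)
    [∀ k, NormedAddCommGroup (E k)] [∀ k, NormedSpace ℝ (E k)]
    [∀ k, CompleteSpace (E k)]
    (lam : ℝ) (hlam0 : 0 < lam) (hlam1 : lam < 1)
    (A : ∀ k : ℤ, E k →L[ℝ] E (k + 1)) (hA : ∀ k, ‖A k‖ ≤ lam) :
    ∃ 𝔸 : lp E ∞ →L[ℝ] lp E ∞,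
      (∀ (v : lp E ∞) (k : ℤ), (𝔸 v : ∀ k, E k) (k + 1) = A k ((v : ∀ k, E k) k)) ∧
      ‖𝔸‖ ≤ lam ∧
      ∃ Q : lp E ∞ ≃L[ℝ] lp E ∞,
        (Q : lp E ∞ →L[ℝ] lp E ∞) = ContinuousLinearMap.id ℝ (lp E ∞) - 𝔸 ∧
        ‖(Q.symm : lp E ∞ →L[ℝ] lp E ∞)‖ ≤ 1 / (1 - lam) :=
  stmt_4_general E lam hlam1 A hA
end

section
/- Let E : ℤ → Type be a family of real Banach spaces, let λ ∈ (0,1) and μ ≥ 0, and for each k ∈ ℤ let B_k : E_k → E_{k+1} be a continuous linear equivalence with ‖B_k‖ ≤ μ and ‖B_k⁻¹‖ ≤ λ. Define 𝔹 on the space ℓ^∞ of bounded families v = (v_k)_{k∈ℤ} with v_k ∈ E_k (sup norm) by (𝔹v)_k = B_{k−1}(v_{k−1}). Then 𝔹 is a well-defined continuous linear operator on ℓ^∞, the operator id − 𝔹 is bijective with continuous inverse, and ‖(id − 𝔹)⁻¹‖ ≤ λ/(1−λ). -/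
/-! The shift `𝔹` is invertible on `ℓ^∞`, its inverse being the backward shift `A` by the
`B_k⁻¹`, and `‖A‖ ≤ λ < 1`. Hence `1 - 𝔹 = -𝔹 (1 - A)` is invertible, with inverse
`-(1 - A)⁻¹ A = -∑_{n ≥ 1} Aⁿ` by the Neumann series, of norm at most
`∑_{n ≥ 1} λⁿ = λ / (1 - λ)`. -/

open scoped ENNReal

section NeumannSeries

variable {R : Type*} [NormedRing R]

theorem norm_tsum_pow_succ_le {x : R} {lam : ℝ} (hx : ‖x‖ ≤ lam) (hlam : lam < 1) :
    ‖∑' n : ℕ, x ^ (n + 1)‖ ≤ lam / (1 - lam) := by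
  have hlam0 : 0 ≤ lam := (norm_nonneg x).trans hx
  have hgeom : HasSum (fun n : ℕ => lam ^ (n + 1)) (lam / (1 - lam)) := by
    simpa only [pow_succ', div_eq_mul_inv] using
      (hasSum_geometric_of_lt_one hlam0 hlam).mul_left lam
  refine tsum_of_norm_bounded hgeom fun n => ?_
  calc ‖x ^ (n + 1)‖ ≤ ‖x‖ ^ (n + 1) := norm_pow_le' x n.succ_pos
    _ ≤ lam ^ (n + 1) := pow_le_pow_left₀ (norm_nonneg x) hx _

variable [HasSummableGeomSeries R]

/-- `1 - u = -u (1 - u⁻¹)`, and the second factor is inverted by a Neumann series. -/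
noncomputable def Units.oneSubOfNormInvLtOne (u : Rˣ) (h : ‖(↑u⁻¹ : R)‖ < 1) : Rˣ :=
  -(u * Units.oneSub _ h)

@[simp]
theorem Units.val_oneSubOfNormInvLtOne (u : Rˣ) (h : ‖(↑u⁻¹ : R)‖ < 1) :
    (u.oneSubOfNormInvLtOne h : R) = 1 - u := by
  simp [Units.oneSubOfNormInvLtOne, mul_sub]

theorem Units.norm_inv_oneSubOfNormInvLtOne_le (u : Rˣ) {lam : ℝ} (hu : ‖(↑u⁻¹ : R)‖ ≤ lam)
    (hlam : lam < 1) (h : ‖(↑u⁻¹ : R)‖ < 1) :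
    ‖(↑(u.oneSubOfNormInvLtOne h)⁻¹ : R)‖ ≤ lam / (1 - lam) := by
  have hinv : (↑(u.oneSubOfNormInvLtOne h)⁻¹ : R) = -∑' n : ℕ, (↑u⁻¹ : R) ^ (n + 1) := by
    simp only [oneSubOfNormInvLtOne, _root_.inv_neg, mul_inv_rev, Units.val_neg, val_mul,
      neg_inj]
    change (∑' n : ℕ, (↑u⁻¹ : R) ^ n) * ↑u⁻¹ = _
    rw [← (summable_geometric_of_norm_lt_one h).tsum_mul_right]
    simp only [← pow_succ]
  rw [hinv, norm_neg]
  exact norm_tsum_pow_succ_le hu hlam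

end NeumannSeries

section LpInfty

variable {𝕜 ι ι' : Type*} [NontriviallyNormedField 𝕜] {E : ι → Type*} {F : ι' → Type*}
  [∀ i, NormedAddCommGroup (E i)] [∀ i, NormedSpace 𝕜 (E i)]
  [∀ j, NormedAddCommGroup (F j)] [∀ j, NormedSpace 𝕜 (F j)]

noncomputable def LinearMap.toLpInfty (L : (∀ i, E i) →ₗ[𝕜] ∀ j, F j) {C : ℝ} (hC : 0 ≤ C)
    (hL : ∀ (v : lp E ∞) j, ‖L v j‖ ≤ C * ‖v‖) : lp E ∞ →L[𝕜] lp F ∞ :=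
  LinearMap.mkContinuous
    { toFun v := ⟨L v, memℓp_infty ⟨C * ‖v‖, by rintro _ ⟨j, rfl⟩; exact hL v j⟩⟩
      map_add' u v := lp.ext (L.map_add u v)
      map_smul' c v := lp.ext (L.map_smul c v) }
    C fun v => lp.norm_le_of_forall_le (by positivity) (hL v)

theorem LinearMap.norm_toLpInfty_le (L : (∀ i, E i) →ₗ[𝕜] ∀ j, F j) {C : ℝ} (hC : 0 ≤ C)
    (hL : ∀ (v : lp E ∞) j, ‖L v j‖ ≤ C * ‖v‖) : ‖L.toLpInfty hC hL‖ ≤ C :=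
  LinearMap.mkContinuous_norm_le _ hC _

noncomputable def LinearEquiv.toLpInfty (L : (∀ i, E i) ≃ₗ[𝕜] ∀ j, F j) {C D : ℝ}
    (hC : 0 ≤ C) (hL : ∀ (v : lp E ∞) j, ‖L v j‖ ≤ C * ‖v‖)
    (hD : 0 ≤ D) (hLsymm : ∀ (w : lp F ∞) i, ‖L.symm w i‖ ≤ D * ‖w‖) :
    lp E ∞ ≃L[𝕜] lp F ∞ :=
  .equivOfInverse (L.toLinearMap.toLpInfty hC hL) (L.symm.toLinearMap.toLpInfty hD hLsymm)
    (fun v => lp.ext (L.symm_apply_apply v)) (fun w => lp.ext (L.apply_symm_apply w))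

theorem LinearEquiv.norm_toLpInfty_symm_le (L : (∀ i, E i) ≃ₗ[𝕜] ∀ j, F j) {C D : ℝ}
    (hC : 0 ≤ C) (hL : ∀ (v : lp E ∞) j, ‖L v j‖ ≤ C * ‖v‖)
    (hD : 0 ≤ D) (hLsymm : ∀ (w : lp F ∞) i, ‖L.symm w i‖ ≤ D * ‖w‖) :
    ‖((L.toLpInfty hC hL hD hLsymm).symm : lp F ∞ →L[𝕜] lp E ∞)‖ ≤ D :=
  L.symm.toLinearMap.norm_toLpInfty_le hD hLsymm

variable (e : ι ≃ ι') (T : ∀ i, E i ≃L[𝕜] F (e i)) {C D : ℝ} (hC : 0 ≤ C)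
  (hT : ∀ i, ‖(T i : E i →L[𝕜] F (e i))‖ ≤ C) (hD : 0 ≤ D)
  (hTsymm : ∀ i, ‖((T i).symm : F (e i) →L[𝕜] E i)‖ ≤ D)

noncomputable def lp.weightedShift_s5 : lp E ∞ ≃L[𝕜] lp F ∞ :=
  LinearEquiv.toLpInfty
    ((LinearEquiv.piCongrRight fun i => (T i).toLinearEquiv).trans
      (LinearEquiv.piCongrLeft 𝕜 F e)) hC
    (fun v j => by
      obtain ⟨i, rfl⟩ := e.surjective j
      change ‖Equiv.piCongrLeft F e (fun i => T i (v i)) (e i)‖ ≤ _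
      rw [Equiv.piCongrLeft_apply_apply]
      exact (ContinuousLinearMap.le_of_opNorm_le _ (hT i) _).trans
        (mul_le_mul_of_nonneg_left (lp.norm_apply_le_norm ENNReal.top_ne_zero v i) hC))
    hD
    (fun w i => by
      change ‖(T i).symm (w (e i))‖ ≤ _
      exact (ContinuousLinearMap.le_of_opNorm_le _ (hTsymm i) _).trans
        (mul_le_mul_of_nonneg_left (lp.norm_apply_le_norm ENNReal.top_ne_zero w _) hD))

@[simp]
theorem lp.weightedShift_apply_apply (v : lp E ∞) (i : ι) :
    lp.weightedShift_s5 e T hC hT hD hTsymm v (e i) = T i (v i) :=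
  Equiv.piCongrLeft_apply_apply F e _ i

theorem lp.norm_weightedShift_symm_le :
    ‖((lp.weightedShift_s5 e T hC hT hD hTsymm).symm : lp F ∞ →L[𝕜] lp E ∞)‖ ≤ D :=
  LinearEquiv.norm_toLpInfty_symm_le _ _ _ _ _

end LpInfty

theorem stmt_5_general
    (E : ℤ → Type*)
    [∀ k, NormedAddCommGroup (E k)] [∀ k, NormedSpace ℝ (E k)]
    [∀ k, CompleteSpace (E k)]
    (lam μ : ℝ) (hlam1 : lam < 1)
    (B : ∀ k : ℤ, E k ≃L[ℝ] E (k + 1))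
    (hB : ∀ k, ‖(B k : E k →L[ℝ] E (k + 1))‖ ≤ μ)
    (hBinv : ∀ k, ‖((B k).symm : E (k + 1) →L[ℝ] E k)‖ ≤ lam) :
    ∃ 𝔹 : lp E ∞ →L[ℝ] lp E ∞,
      (∀ (v : lp E ∞) (k : ℤ), (𝔹 v : ∀ k, E k) (k + 1) = B k ((v : ∀ k, E k) k)) ∧
      ∃ Q : lp E ∞ ≃L[ℝ] lp E ∞,
        (Q : lp E ∞ →L[ℝ] lp E ∞) = ContinuousLinearMap.id ℝ (lp E ∞) - 𝔹 ∧
        ‖(Q.symm : lp E ∞ →L[ℝ] lp E ∞)‖ ≤ lam / (1 - lam) := by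
  have hμ : 0 ≤ μ := (norm_nonneg _).trans (hB 0)
  have hlam : 0 ≤ lam := (norm_nonneg _).trans (hBinv 0)
  let S := lp.weightedShift_s5 (Equiv.addRight 1) B hμ hB hlam hBinv
  let u := S.toUnit
  have hu : ‖(↑u⁻¹ : lp E ∞ →L[ℝ] lp E ∞)‖ ≤ lam :=
    lp.norm_weightedShift_symm_le (Equiv.addRight 1) B hμ hB hlam hBinv
  have hu1 := hu.trans_lt hlam1
  refine ⟨S, lp.weightedShift_apply_apply (Equiv.addRight 1) B hμ hB hlam hBinv,
    .ofUnit (u.oneSubOfNormInvLtOne hu1), u.val_oneSubOfNormInvLtOne hu1,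
    u.norm_inv_oneSubOfNormInvLtOne_le hu hlam1 hu1⟩

theorem stmt_5
    (E : ℤ → Type*)
    [∀ k, NormedAddCommGroup (E k)] [∀ k, NormedSpace ℝ (E k)]
    [∀ k, CompleteSpace (E k)]
    (lam μ : ℝ) (hlam0 : 0 < lam) (hlam1 : lam < 1) (hμ : 0 ≤ μ)
    (B : ∀ k : ℤ, E k ≃L[ℝ] E (k + 1))
    (hB : ∀ k, ‖(B k : E k →L[ℝ] E (k + 1))‖ ≤ μ)
    (hBinv : ∀ k, ‖((B k).symm : E (k + 1) →L[ℝ] E k)‖ ≤ lam) :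
    ∃ 𝔹 : lp E ∞ →L[ℝ] lp E ∞,
      (∀ (v : lp E ∞) (k : ℤ), (𝔹 v : ∀ k, E k) (k + 1) = B k ((v : ∀ k, E k) k)) ∧
      ∃ Q : lp E ∞ ≃L[ℝ] lp E ∞,
        (Q : lp E ∞ →L[ℝ] lp E ∞) = ContinuousLinearMap.id ℝ (lp E ∞) - 𝔹 ∧
        ‖(Q.symm : lp E ∞ →L[ℝ] lp E ∞)‖ ≤ lam / (1 - lam) :=
  stmt_5_general E lam μ hlam1 B hB hBinv
end

section
/- Let Xs and Xu be real Banach spaces and E = Xs × Xu with the sup norm; let π_s : E → Xs, π_u : E → Xu be the projections and ι_s : Xs → E, ι_u : Xu → E the canonical inclusions. Let λ ∈ (0,1) and ε, δ, C, μ > 0 satisfy C/(1−λ) ≤ 1/2 and δ/(1−λ) ≤ ε/2. For each k ∈ ℤ let G_k : E → E be a differentiable map, and write A_k = DG_k(0). Assume for every k ∈ ℤ: (i) ‖π_s ∘ A_k ∘ ι_s‖ ≤ λ; (ii) there is a continuous linear equivalence B_k : Xu → Xu whose underlying map equals π_u ∘ A_k ∘ ι_u, with ‖B_k‖ ≤ μ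 and ‖B_k⁻¹‖ ≤ λ; (iii) ‖π_s ∘ A_k ∘ ι_u‖ ≤ C/2 and ‖π_u ∘ A_k ∘ ι_s‖ ≤ C/2; (iv) ‖DG_k(v) − A_k‖ ≤ C/2 for every v ∈ E with ‖v‖ ≤ ε; (v) ‖G_k(0)‖ ≤ δ. Then there exists exactly one sequence (v_k)_{k∈ℤ} in E such that ‖v_k‖ ≤ ε for all k ∈ ℤ and v_{k+1} = G_k(v_k) for all k ∈ ℤ. -/
/-!
Split `G k = D k + H k`, where `D k v = (S k v.1, B k v.2)` is the block diagonal of `A k`.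
The mean value inequality and the bounds on the off-diagonal blocks of `A k` make `H k`
`C`-Lipschitz on the `ε`-ball. Orbits are the fixed points of the Lyapunov–Perron operator, which
propagates stable coordinates forward and solves for unstable ones backward through `(B k)⁻¹`.
As `‖S k‖, ‖(B k)⁻¹‖ ≤ λ`, this operator is a `(λ + C)`-contraction of the `ε`-ball of
`ℓ^∞(ℤ, E)`, and `δ ≤ (1 - λ - C) ε` makes it map that ball into itself, so the Banach fixed
point theorem applies.
-/

open scoped ENNReal

theorem existsUnique_fixedPoint_of_forall_norm_sub_le {ι E : Type*} [NormedAddCommGroup E]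
    [CompleteSpace E] {ε K : ℝ} (hε : 0 ≤ ε) (hK : K < 1) (Φ : (ι → E) → ι → E)
    (hΦ0 : ∀ k, ‖Φ 0 k‖ ≤ (1 - K) * ε)
    (hΦ : ∀ v w, (∀ k, ‖v k‖ ≤ ε) → (∀ k, ‖w k‖ ≤ ε) → ∀ D, (∀ k, ‖v k - w k‖ ≤ D) →
      ∀ k, ‖Φ v k - Φ w k‖ ≤ K * D) :
    ∃! v, (∀ k, ‖v k‖ ≤ ε) ∧ Φ v = v := by
  set s : Set (lp (fun _ : ι => E) ∞) := Metric.closedBall 0 ε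
  have mem_s (f : lp (fun _ : ι => E) ∞) : f ∈ s ↔ ∀ k, ‖f k‖ ≤ ε := by
    rw [mem_closedBall_zero_iff]
    exact ⟨fun h k => (lp.norm_apply_le_norm ENNReal.top_ne_zero f k).trans h,
      lp.norm_le_of_forall_le hε⟩
  have toLp {v : ι → E} (hv : ∀ k, ‖v k‖ ≤ ε) : ∃ f : s, ⇑f.1 = v :=
    ⟨⟨⟨v, memℓp_infty ⟨ε, by rintro _ ⟨k, rfl⟩; exact hv k⟩⟩, (mem_s _).2 hv⟩, rfl⟩
  have maps_to (v : ι → E) (hv : ∀ k, ‖v k‖ ≤ ε) (k : ι) : ‖Φ v k‖ ≤ ε := by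
    have h := hΦ v 0 hv (fun _ => by simpa using hε) ε (by simpa using hv) k
    calc ‖Φ v k‖ ≤ ‖Φ v k - Φ 0 k‖ + ‖Φ 0 k‖ := norm_le_norm_sub_add _ _
      _ ≤ K * ε + (1 - K) * ε := add_le_add h (hΦ0 k)
      _ = ε := by ring
  choose T hT using fun f : s => toLp (maps_to _ ((mem_s f).1 f.2))
  have hTc : ContractingWith K.toNNReal T := by
    refine ⟨Real.toNNReal_lt_one.2 hK, LipschitzWith.of_dist_le_mul fun f g => ?_⟩
    rw [Subtype.dist_eq, Subtype.dist_eq, dist_eq_norm, dist_eq_norm]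
    refine lp.norm_le_of_forall_le (by positivity) fun k => ?_
    have hfg (j : ι) : ‖f.1 j - g.1 j‖ ≤ ‖f.1 - g.1‖ := by
      rw [← Pi.sub_apply, ← lp.coeFn_sub]
      exact lp.norm_apply_le_norm ENNReal.top_ne_zero _ j
    rw [lp.coeFn_sub, Pi.sub_apply, hT, hT]
    calc _ ≤ K * ‖f.1 - g.1‖ :=
          hΦ _ _ ((mem_s f).1 f.2) ((mem_s g).1 g.2) _ hfg k
      _ ≤ K.toNNReal * ‖f.1 - g.1‖ :=
          mul_le_mul_of_nonneg_right (Real.le_coe_toNNReal K) (norm_nonneg _)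
  have : CompleteSpace s := Metric.isClosed_closedBall.completeSpace_coe
  have : Nonempty s := ⟨⟨0, Metric.mem_closedBall_self hε⟩⟩
  have fixed_iff (f : s) : T f = f ↔ Φ f.1 = f.1 := by
    rw [← hT f, Subtype.ext_iff]
    exact ⟨congrArg _, fun h => lp.ext h⟩
  set x := ContractingWith.fixedPoint T hTc
  refine ⟨x, ⟨(mem_s _).1 x.2, (fixed_iff x).1 hTc.fixedPoint_isFixedPt⟩, ?_⟩
  rintro v ⟨hv, hΦv⟩
  obtain ⟨y, rfl⟩ := toLp hv
  exact congrArg (fun z : s => ⇑z.1) (hTc.fixedPoint_unique ((fixed_iff y).2 hΦv))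

section LyapunovPerron

variable {𝕜 Xs Xu : Type*} [NontriviallyNormedField 𝕜]
  [NormedAddCommGroup Xs] [NormedSpace 𝕜 Xs] [NormedAddCommGroup Xu] [NormedSpace 𝕜 Xu]
  (S : ℤ → Xs →L[𝕜] Xs) (B : ℤ → Xu ≃L[𝕜] Xu) (H : ℤ → Xs × Xu → Xs × Xu)

def lyapunovPerron (v : ℤ → Xs × Xu) (k : ℤ) : Xs × Xu :=
  (S (k - 1) (v (k - 1)).1 + (H (k - 1) (v (k - 1))).1,
    (B k).symm ((v (k + 1)).2 - (H k (v k)).2))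

theorem lyapunovPerron_eq_self_iff (v : ℤ → Xs × Xu) :
    lyapunovPerron S B H v = v ↔ ∀ k, v (k + 1) = (S k (v k).1, B k (v k).2) + H k (v k) := by
  simp only [funext_iff, lyapunovPerron, Prod.ext_iff, Prod.fst_add, Prod.snd_add,
    ContinuousLinearEquiv.symm_apply_eq, sub_eq_iff_eq_add]
  constructor
  · intro h k
    exact ⟨by simpa using (h (k + 1)).1.symm, (h k).2⟩
  · intro h k
    exact ⟨by simpa using ((h (k - 1)).1).symm, (h k).2⟩

variable {S B H} {lam C ε δ : ℝ}

theorem norm_lyapunovPerron_sub_le (hS : ∀ k, ‖S k‖ ≤ lam)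
    (hB : ∀ k, ‖((B k).symm : Xu →L[𝕜] Xu)‖ ≤ lam) (hC : 0 ≤ C) (hlamC : lam + C < 1)
    (hH : ∀ k v w, ‖v‖ ≤ ε → ‖w‖ ≤ ε → ‖H k v - H k w‖ ≤ C * ‖v - w‖)
    {v w : ℤ → Xs × Xu} (hv : ∀ k, ‖v k‖ ≤ ε) (hw : ∀ k, ‖w k‖ ≤ ε) {D : ℝ}
    (hD : ∀ k, ‖v k - w k‖ ≤ D) (k : ℤ) :
    ‖lyapunovPerron S B H v k - lyapunovPerron S B H w k‖ ≤ (lam + C) * D := by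
  have hD0 : 0 ≤ D := (norm_nonneg _).trans (hD 0)
  have hH' (j : ℤ) : ‖H j (v j) - H j (w j)‖ ≤ C * D :=
    (hH j _ _ (hv j) (hw j)).trans (mul_le_mul_of_nonneg_left (hD j) hC)
  refine norm_prod_le_iff.2 ⟨?_, ?_⟩
  · calc ‖(lyapunovPerron S B H v k - lyapunovPerron S B H w k).1‖
        = ‖S (k - 1) (v (k - 1) - w (k - 1)).1
            + (H (k - 1) (v (k - 1)) - H (k - 1) (w (k - 1))).1‖ := by
          simp only [lyapunovPerron, Prod.fst_sub, map_sub]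
          congr 1
          abel
      _ ≤ lam * ‖(v (k - 1) - w (k - 1)).1‖ + ‖H (k - 1) (v (k - 1)) - H (k - 1) (w (k - 1))‖ :=
          norm_add_le_of_le ((S _).le_of_opNorm_le (hS _) _) (norm_fst_le _)
      _ ≤ lam * D + C * D := by
          gcongr
          · exact (norm_nonneg _).trans (hS 0)
          · exact (norm_fst_le _).trans (hD _)
          · exact hH' _
      _ = (lam + C) * D := by ring
  · have hlam : 0 ≤ lam := (norm_nonneg _).trans (hS 0)
    calc ‖(lyapunovPerron S B H v k - lyapunovPerron S B H w k).2‖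
        = ‖(B k).symm ((v (k + 1) - w (k + 1)).2 - (H k (v k) - H k (w k)).2)‖ := by
          simp only [lyapunovPerron, Prod.snd_sub, map_sub]
          congr 1
          abel
      _ ≤ lam * (D + C * D) :=
          (((B k).symm : Xu →L[𝕜] Xu).le_of_opNorm_le (hB k) _).trans <| by
            gcongr
            exact norm_sub_le_of_le ((norm_snd_le _).trans (hD _))
              ((norm_snd_le _).trans (hH' k))
      _ ≤ (lam + C) * D := by
          nlinarith [mul_nonneg (mul_nonneg (by linarith : 0 ≤ 1 - lam) hC) hD0]

theorem norm_lyapunovPerron_zero_le (hB : ∀ k, ‖((B k).symm : Xu →L[𝕜] Xu)‖ ≤ lam)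
    (hlam : lam ≤ 1) (hH0 : ∀ k, ‖H k 0‖ ≤ δ) (k : ℤ) : ‖lyapunovPerron S B H 0 k‖ ≤ δ := by
  refine norm_prod_le_iff.2 ⟨?_, ?_⟩
  · simpa [lyapunovPerron] using (norm_fst_le _).trans (hH0 (k - 1))
  · calc ‖(B k).symm (0 - (H k 0).2)‖ ≤ lam * ‖0 - (H k 0).2‖ :=
          ((B k).symm : Xu →L[𝕜] Xu).le_of_opNorm_le (hB k) _
      _ ≤ 1 * δ := by
          rw [zero_sub, norm_neg]
          gcongr
          exact (norm_snd_le _).trans (hH0 k)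
      _ = δ := one_mul δ

theorem existsUnique_orbit_of_hyperbolic_add_lipschitz [CompleteSpace Xs] [CompleteSpace Xu]
    (hS : ∀ k, ‖S k‖ ≤ lam) (hB : ∀ k, ‖((B k).symm : Xu →L[𝕜] Xu)‖ ≤ lam) (hC : 0 ≤ C)
    (hH : ∀ k v w, ‖v‖ ≤ ε → ‖w‖ ≤ ε → ‖H k v - H k w‖ ≤ C * ‖v - w‖)
    (hH0 : ∀ k, ‖H k 0‖ ≤ δ) (hε : 0 ≤ ε) (hlamC : lam + C < 1)
    (hδ : δ ≤ (1 - (lam + C)) * ε) :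
    ∃! v : ℤ → Xs × Xu, (∀ k, ‖v k‖ ≤ ε) ∧
      ∀ k, v (k + 1) = (S k (v k).1, B k (v k).2) + H k (v k) := by
  simp only [← lyapunovPerron_eq_self_iff]
  exact existsUnique_fixedPoint_of_forall_norm_sub_le hε hlamC _
    (fun k => (norm_lyapunovPerron_zero_le hB (by linarith) hH0 k).trans hδ)
    (fun v w hv hw D hD => norm_lyapunovPerron_sub_le hS hB hC hlamC hH hv hw hD)

end LyapunovPerron

section BlockDiag

variable {𝕜 E F : Type*} [NontriviallyNormedField 𝕜]
  [NormedAddCommGroup E] [NormedSpace 𝕜 E] [NormedAddCommGroup F] [NormedSpace 𝕜 F]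

open ContinuousLinearMap in
def blockDiag (A : E × F →L[𝕜] E × F) : E × F →L[𝕜] E × F :=
  (fst 𝕜 E F ∘L A ∘L inl 𝕜 E F).prodMap (snd 𝕜 E F ∘L A ∘L inr 𝕜 E F)

open ContinuousLinearMap in
theorem norm_apply_sub_blockDiag_le (A : E × F →L[𝕜] E × F) {c : ℝ}
    (hEF : ‖fst 𝕜 E F ∘L A ∘L inr 𝕜 E F‖ ≤ c) (hFE : ‖snd 𝕜 E F ∘L A ∘L inl 𝕜 E F‖ ≤ c)
    (d : E × F) : ‖A d - blockDiag A d‖ ≤ c * ‖d‖ := by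
  have hd : A d = A (d.1, 0) + A (0, d.2) := by
    rw [← map_add, Prod.mk_add_mk, add_zero, zero_add]
  have hc : 0 ≤ c := (norm_nonneg _).trans hEF
  refine norm_prod_le_iff.2 ⟨?_, ?_⟩
  · calc _ = ‖(fst 𝕜 E F ∘L A ∘L inr 𝕜 E F) d.2‖ := by simp [blockDiag, hd]
      _ ≤ c * ‖d‖ := (le_of_opNorm_le _ hEF _).trans (by gcongr; exact _root_.norm_snd_le d)
  · calc _ = ‖(snd 𝕜 E F ∘L A ∘L inl 𝕜 E F) d.1‖ := by simp [blockDiag, hd]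
      _ ≤ c * ‖d‖ := (le_of_opNorm_le _ hFE _).trans (by gcongr; exact _root_.norm_fst_le d)

end BlockDiag

open ContinuousLinearMap in
theorem norm_sub_blockDiag_sub_le {E F : Type*}
    [NormedAddCommGroup E] [NormedSpace ℝ E] [NormedAddCommGroup F] [NormedSpace ℝ F]
    {G : E × F → E × F} {A : E × F →L[ℝ] E × F} {ε c₁ c₂ : ℝ} (hG : Differentiable ℝ G)
    (hDG : ∀ v, ‖v‖ ≤ ε → ‖fderiv ℝ G v - A‖ ≤ c₁)
    (hEF : ‖fst ℝ E F ∘L A ∘L inr ℝ E F‖ ≤ c₂) (hFE : ‖snd ℝ E F ∘L A ∘L inl ℝ E F‖ ≤ c₂)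
    {v w : E × F} (hv : ‖v‖ ≤ ε) (hw : ‖w‖ ≤ ε) :
    ‖(G v - blockDiag A v) - (G w - blockDiag A w)‖ ≤ (c₁ + c₂) * ‖v - w‖ := by
  have mean_value := (convex_closedBall (0 : E × F) ε).norm_image_sub_le_of_norm_fderiv_le'
    (fun x _ => hG.differentiableAt) (fun x hx => hDG x (mem_closedBall_zero_iff.1 hx))
    (mem_closedBall_zero_iff.2 hw) (mem_closedBall_zero_iff.2 hv)
  calc _ = ‖(G v - G w - A (v - w)) + (A (v - w) - blockDiag A (v - w))‖ := by
        rw [map_sub (blockDiag A)]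
        congr 1
        abel
    _ ≤ c₁ * ‖v - w‖ + c₂ * ‖v - w‖ :=
        norm_add_le_of_le mean_value (norm_apply_sub_blockDiag_le A hEF hFE _)
    _ = (c₁ + c₂) * ‖v - w‖ := by ring

theorem stmt_6_general
    {Xs Xu : Type*}
    [NormedAddCommGroup Xs] [NormedSpace ℝ Xs] [CompleteSpace Xs]
    [NormedAddCommGroup Xu] [NormedSpace ℝ Xu] [CompleteSpace Xu]
    (lam ε δ C μ : ℝ) (hlam1 : lam < 1)
    (hε : 0 < ε) (hC : 0 < C)
    (hC' : C / (1 - lam) ≤ 1 / 2) (hδ' : δ / (1 - lam) ≤ ε / 2)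
    (G : ℤ → (Xs × Xu) → (Xs × Xu)) (hG : ∀ k, Differentiable ℝ (G k))
    (A : ℤ → (Xs × Xu) →L[ℝ] (Xs × Xu))
    (hss : ∀ k, ‖(ContinuousLinearMap.fst ℝ Xs Xu).comp
      ((A k).comp (ContinuousLinearMap.inl ℝ Xs Xu))‖ ≤ lam)
    (huu : ∀ k, ∃ B : Xu ≃L[ℝ] Xu,
      (B : Xu →L[ℝ] Xu) = (ContinuousLinearMap.snd ℝ Xs Xu).comp
        ((A k).comp (ContinuousLinearMap.inr ℝ Xs Xu)) ∧
      ‖(B : Xu →L[ℝ] Xu)‖ ≤ μ ∧ ‖(B.symm : Xu →L[ℝ] Xu)‖ ≤ lam)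
    (hsu : ∀ k, ‖(ContinuousLinearMap.fst ℝ Xs Xu).comp
      ((A k).comp (ContinuousLinearMap.inr ℝ Xs Xu))‖ ≤ C / 2)
    (hus : ∀ k, ‖(ContinuousLinearMap.snd ℝ Xs Xu).comp
      ((A k).comp (ContinuousLinearMap.inl ℝ Xs Xu))‖ ≤ C / 2)
    (hDG : ∀ k, ∀ v : Xs × Xu, ‖v‖ ≤ ε → ‖fderiv ℝ (G k) v - A k‖ ≤ C / 2)
    (hG0 : ∀ k, ‖G k 0‖ ≤ δ) :
    ∃! v : ℤ → Xs × Xu, (∀ k, ‖v k‖ ≤ ε) ∧ (∀ k, v (k + 1) = G k (v k)) := by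
  choose B hB _ hBlam using huu
  set S := fun k => (ContinuousLinearMap.fst ℝ Xs Xu).comp
    ((A k).comp (ContinuousLinearMap.inl ℝ Xs Xu))
  have hdiag (k : ℤ) (x : Xs × Xu) : (S k x.1, B k x.2) = blockDiag (A k) x := by
    rw [← ContinuousLinearEquiv.coe_coe, hB k]
    rfl
  set H : ℤ → Xs × Xu → Xs × Xu := fun k v => G k v - blockDiag (A k) v
  have hH (k : ℤ) (v w : Xs × Xu) (hv : ‖v‖ ≤ ε) (hw : ‖w‖ ≤ ε) :
      ‖H k v - H k w‖ ≤ C * ‖v - w‖ := by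
    simpa only [H, add_halves] using
      norm_sub_blockDiag_sub_le (hG k) (hDG k) (hsu k) (hus k) hv hw
  have hH0 (k : ℤ) : ‖H k 0‖ ≤ δ := by simpa [H] using hG0 k
  rw [div_le_iff₀ (sub_pos.2 hlam1)] at hC' hδ'
  simpa only [hdiag, H, add_sub_cancel] using
    existsUnique_orbit_of_hyperbolic_add_lipschitz (S := S) hss hBlam hC.le hH hH0 hε.le
      (by linarith) (by nlinarith)

theorem stmt_6
    {Xs Xu : Type*}
    [NormedAddCommGroup Xs] [NormedSpace ℝ Xs] [CompleteSpace Xs]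
    [NormedAddCommGroup Xu] [NormedSpace ℝ Xu] [CompleteSpace Xu]
    (lam ε δ C μ : ℝ) (hlam0 : 0 < lam) (hlam1 : lam < 1)
    (hε : 0 < ε) (hδ : 0 < δ) (hC : 0 < C) (hμ : 0 < μ)
    (hC' : C / (1 - lam) ≤ 1 / 2) (hδ' : δ / (1 - lam) ≤ ε / 2)
    (G : ℤ → (Xs × Xu) → (Xs × Xu)) (hG : ∀ k, Differentiable ℝ (G k))
    (A : ℤ → (Xs × Xu) →L[ℝ] (Xs × Xu)) (hA : ∀ k, A k = fderiv ℝ (G k) 0)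
    (hss : ∀ k, ‖(ContinuousLinearMap.fst ℝ Xs Xu).comp
      ((A k).comp (ContinuousLinearMap.inl ℝ Xs Xu))‖ ≤ lam)
    (huu : ∀ k, ∃ B : Xu ≃L[ℝ] Xu,
      (B : Xu →L[ℝ] Xu) = (ContinuousLinearMap.snd ℝ Xs Xu).comp
        ((A k).comp (ContinuousLinearMap.inr ℝ Xs Xu)) ∧
      ‖(B : Xu →L[ℝ] Xu)‖ ≤ μ ∧ ‖(B.symm : Xu →L[ℝ] Xu)‖ ≤ lam)
    (hsu : ∀ k, ‖(ContinuousLinearMap.fst ℝ Xs Xu).comp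
      ((A k).comp (ContinuousLinearMap.inr ℝ Xs Xu))‖ ≤ C / 2)
    (hus : ∀ k, ‖(ContinuousLinearMap.snd ℝ Xs Xu).comp
      ((A k).comp (ContinuousLinearMap.inl ℝ Xs Xu))‖ ≤ C / 2)
    (hDG : ∀ k, ∀ v : Xs × Xu, ‖v‖ ≤ ε → ‖fderiv ℝ (G k) v - A k‖ ≤ C / 2)
    (hG0 : ∀ k, ‖G k 0‖ ≤ δ) :
    ∃! v : ℤ → Xs × Xu, (∀ k, ‖v k‖ ≤ ε) ∧ (∀ k, v (k + 1) = G k (v k)) :=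
  stmt_6_general lam ε δ C μ hlam1 hε hC hC' hδ' G hG A hss huu hsu hus hDG hG0
end

section
/- Let Xs, Xu, Xc be real Banach spaces, W = Xs × Xu and E = W × Xc, all products with the sup norm. Let π_s, π_u, π_c denote the projections of E onto Xs, Xu, Xc and ι_s, ι_u, ι_c the canonical inclusions of Xs, Xu, Xc into E; let ι_W : W → E be ι_W(v) = (v,0). Let λ ∈ (0,1) and ε, δ, C, μ > 0 satisfy 2C/(1−λ) ≤ 1/2 and 2δ/(1−λ) ≤ ε/2. For each k ∈ ℤ let F_k : E → E be a differentiable map, and write A_k = DF_k(0). Assume for every k ∈ ℤ: (i) ‖π_s ∘ A_k ∘ ι_s‖ ≤ λ; (ii) there is a continuous linear equivalence B_k : Xu → Xu whose underlying map equals π_u ∘ A_k ∘ ι_u, with ‖B_k‖ ≤ μ and ‖B_k⁻¹‖ ≤ λ; (iii) the sum of ‖π_i ∘ A_k ∘ ι_j‖ over all pairs i ≠ j with i, j ∈ {s,c,u} is at most C/2; (iv) ‖DF_k(v) − A_k‖ ≤ C/2 for every v ∈ E with ‖v‖ ≤ ε; (v) ‖F_k(0)‖ ≤ δ. Then there exists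 exactly one pair of sequences (u_k)_{k∈ℤ} in Xc and (v_k)_{k∈ℤ} in W such that ‖u_k‖ + ‖v_k‖ ≤ ε for all k ∈ ℤ and ι_W(v_{k+1}) = ι_c(u_{k+1}) + F_k(ι_W(v_k)) for all k ∈ ℤ. -/
/-!
Only the `W`-component of the equation is a genuine dynamical problem: it says `v (k+1)` is the
`W`-part of `F k (v k, 0)`, after which `u (k+1)` is forced to be minus the center part. By the mean
value theorem the `W`-part of `F k` restricted to the `ε`-ball of `W` is, up to Lipschitz errors of
size `C`, the hyperbolic linear map `(s, u) ↦ (λ-contraction of s, B k u)`. Its bounded orbits are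
the fixed points of the operator that pushes the stable coordinate forward and pulls the unstable
one back through `B⁻¹`. On sequences with the sup norm this operator is a `(λ + C)`-contraction
of every ball of radius between `ε/2` and `ε`: the fixed point in the `ε/2`-ball leaves room for
the center term in `‖u k‖ + ‖v k‖ ≤ ε`, and contraction on the `ε`-ball gives uniqueness.
-/

open Function BoundedContinuousFunction

section BoundedSequences

variable {ι E : Type*} [TopologicalSpace ι] [DiscreteTopology ι]
  [NormedAddCommGroup E] [CompleteSpace E]

theorem existsUnique_fixedPoint_of_norm_sub_le (Φ : (ι → E) → ι → E) {κ δ r : ℝ}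
    (hκ0 : 0 ≤ κ) (hκ1 : κ < 1) (hr : 0 ≤ r) (hδ : δ ≤ (1 - κ) * r)
    (hΦ0 : ∀ i, ‖Φ 0 i‖ ≤ δ)
    (hΦ : ∀ v w : ι → E, (∀ i, ‖v i‖ ≤ r) → (∀ i, ‖w i‖ ≤ r) → ∀ D : ℝ,
      (∀ i, ‖v i - w i‖ ≤ D) → ∀ i, ‖Φ v i - Φ w i‖ ≤ κ * D) :
    ∃! v : ι → E, (∀ i, ‖v i‖ ≤ r) ∧ Φ v = v := by
  have hmaps (v : ι → E) (hv : ∀ i, ‖v i‖ ≤ r) (i : ι) : ‖Φ v i‖ ≤ r :=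
    calc ‖Φ v i‖ ≤ ‖Φ 0 i‖ + ‖Φ v i - Φ 0 i‖ := norm_le_norm_add_norm_sub' _ _
      _ ≤ δ + κ * r :=
        add_le_add (hΦ0 i) (hΦ v 0 hv (fun _ => by simpa using hr) r (by simpa using hv) i)
      _ ≤ r := by linarith
  let ball := Metric.closedBall (0 : ι →ᵇ E) r
  let toBall (v : ι → E) (hv : ∀ i, ‖v i‖ ≤ r) : ball :=
    ⟨.ofNormedAddCommGroupDiscrete v r hv,
      mem_closedBall_zero_iff.2 (BoundedContinuousFunction.norm_ofNormedAddCommGroup_le _ hr _)⟩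
  have norm_apply_le (p : ball) (i : ι) : ‖p.1 i‖ ≤ r :=
    (p.1.norm_coe_le_norm i).trans (mem_closedBall_zero_iff.1 p.2)
  let Ψ (p : ball) : ball := toBall (Φ p.1) (hmaps _ (norm_apply_le p))
  have hΨ : ContractingWith ⟨κ, hκ0⟩ Ψ := by
    refine ⟨hκ1, LipschitzWith.of_dist_le_mul fun p q => ?_⟩
    rw [Subtype.dist_eq, Subtype.dist_eq, dist_eq_norm, dist_eq_norm]
    refine (BoundedContinuousFunction.norm_le (by positivity)).2 fun i => ?_
    exact hΦ _ _ (norm_apply_le p) (norm_apply_le q) _ (p.1 - q.1).norm_coe_le_norm i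
  have : CompleteSpace ball := Metric.isClosed_closedBall.completeSpace_coe
  have : Nonempty ball := ⟨toBall 0 fun _ => by simpa using hr⟩
  have isFixedPt_toBall_iff (v : ι → E) (hv) : IsFixedPt Ψ (toBall v hv) ↔ Φ v = v := by
    simp only [IsFixedPt, Ψ, toBall, Subtype.ext_iff, BoundedContinuousFunction.ext_iff]
    exact funext_iff.symm
  set p := ContractingWith.fixedPoint Ψ hΨ
  refine ⟨p.1, ⟨norm_apply_le p, (isFixedPt_toBall_iff _ (norm_apply_le p)).1 ?_⟩, ?_⟩
  · exact hΨ.fixedPoint_isFixedPt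
  · rintro w ⟨hw, hΦw⟩
    exact congrArg (fun q : ball => ⇑q.1)
      (hΨ.fixedPoint_unique ((isFixedPt_toBall_iff w hw).2 hΦw))

end BoundedSequences

section HyperbolicOrbit

variable {Xs Xu : Type*} [NormedAddCommGroup Xu] [NormedSpace ℝ Xu]

def hyperbolicOrbitOperator (gs : ℤ → Xs × Xu → Xs) (h : ℤ → Xs × Xu → Xu)
    (B : ℤ → Xu ≃L[ℝ] Xu) (v : ℤ → Xs × Xu) (k : ℤ) : Xs × Xu :=
  (gs (k - 1) (v (k - 1)), (B k).symm ((v (k + 1)).2 - h k (v k)))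

variable {gs : ℤ → Xs × Xu → Xs} {h : ℤ → Xs × Xu → Xu} {B : ℤ → Xu ≃L[ℝ] Xu}

theorem hyperbolicOrbitOperator_eq_self_iff {v : ℤ → Xs × Xu} :
    hyperbolicOrbitOperator gs h B v = v ↔
      ∀ k, v (k + 1) = (gs k (v k), B k (v k).2 + h k (v k)) := by
  simp only [funext_iff, hyperbolicOrbitOperator, Prod.ext_iff,
    ContinuousLinearEquiv.symm_apply_eq, sub_eq_iff_eq_add, forall_and]
  refine and_congr ⟨fun hs k => ?_, fun hs k => ?_⟩ Iff.rfl
  · simpa using (hs (k + 1)).symm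
  · simpa using (hs (k - 1)).symm

variable [NormedAddCommGroup Xs] {lam C r : ℝ}

theorem norm_hyperbolicOrbitOperator_sub_le (hlam0 : 0 ≤ lam) (hlam1 : lam ≤ 1) (hC : 0 ≤ C)
    (hB : ∀ k, ‖((B k).symm : Xu →L[ℝ] Xu)‖ ≤ lam)
    (hgs : ∀ k a b, ‖a‖ ≤ r → ‖b‖ ≤ r → ‖gs k a - gs k b‖ ≤ (lam + C) * ‖a - b‖)
    (hh : ∀ k a b, ‖a‖ ≤ r → ‖b‖ ≤ r → ‖h k a - h k b‖ ≤ C * ‖a - b‖)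
    {v w : ℤ → Xs × Xu} (hv : ∀ k, ‖v k‖ ≤ r) (hw : ∀ k, ‖w k‖ ≤ r) {D : ℝ}
    (hD : ∀ k, ‖v k - w k‖ ≤ D) (k : ℤ) :
    ‖hyperbolicOrbitOperator gs h B v k - hyperbolicOrbitOperator gs h B w k‖ ≤
      (lam + C) * D := by
  have hD0 : 0 ≤ D := (norm_nonneg _).trans (hD k)
  refine norm_prod_le_iff.2 ⟨?_, ?_⟩
  · exact (hgs _ _ _ (hv _) (hw _)).trans (mul_le_mul_of_nonneg_left (hD _) (by positivity))
  · have hunst : ‖(v (k + 1)).2 - (w (k + 1)).2‖ ≤ D := (norm_snd_le _).trans (hD _)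
    have hrem := (hh k _ _ (hv k) (hw k)).trans (mul_le_mul_of_nonneg_left (hD k) hC)
    calc ‖(B k).symm ((v (k + 1)).2 - h k (v k)) - (B k).symm ((w (k + 1)).2 - h k (w k))‖
        = ‖(B k).symm (((v (k + 1)).2 - (w (k + 1)).2) - (h k (v k) - h k (w k)))‖ := by
          rw [← map_sub]; congr 2; abel
      _ ≤ lam * (D + C * D) :=
          (ContinuousLinearMap.le_of_opNorm_le _ (hB k) _).trans (mul_le_mul_of_nonneg_left
            ((norm_sub_le _ _).trans (add_le_add hunst hrem)) hlam0)
      _ ≤ (lam + C) * D := by nlinarith [mul_nonneg hC hD0]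

variable [CompleteSpace Xs] [CompleteSpace Xu]

theorem existsUnique_bounded_orbit {δ : ℝ} (hlam0 : 0 ≤ lam) (hC : 0 ≤ C) (hlamC : lam + C < 1)
    (hr : 0 ≤ r) (hδ : δ ≤ (1 - (lam + C)) * r) (hB : ∀ k, ‖((B k).symm : Xu →L[ℝ] Xu)‖ ≤ lam)
    (hgs : ∀ k a b, ‖a‖ ≤ r → ‖b‖ ≤ r → ‖gs k a - gs k b‖ ≤ (lam + C) * ‖a - b‖)
    (hh : ∀ k a b, ‖a‖ ≤ r → ‖b‖ ≤ r → ‖h k a - h k b‖ ≤ C * ‖a - b‖)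
    (hgs0 : ∀ k, ‖gs k 0‖ ≤ δ) (hh0 : ∀ k, ‖h k 0‖ ≤ δ) :
    ∃! v : ℤ → Xs × Xu, (∀ k, ‖v k‖ ≤ r) ∧
      ∀ k, v (k + 1) = (gs k (v k), B k (v k).2 + h k (v k)) := by
  have hlam1 : lam ≤ 1 := by linarith
  simp only [← hyperbolicOrbitOperator_eq_self_iff]
  refine existsUnique_fixedPoint_of_norm_sub_le _ (by positivity) hlamC hr hδ (fun k => ?_)
    fun v w hv hw D hD => norm_hyperbolicOrbitOperator_sub_le hlam0 hlam1 hC hB hgs hh hv hw hD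
  refine norm_prod_le_iff.2 ⟨hgs0 _, ?_⟩
  calc ‖(B k).symm ((0 : Xs × Xu).2 - h k 0)‖ ≤ lam * ‖h k 0‖ := by
        simpa using ContinuousLinearMap.le_of_opNorm_le _ (hB k) (h k 0)
    _ ≤ δ := (mul_le_of_le_one_left (norm_nonneg _) hlam1).trans (hh0 k)

end HyperbolicOrbit

namespace ContinuousLinearMap

theorem opNorm_le_comp_inl_add_comp_inr {𝕜 X Y Z : Type*}
    [NontriviallyNormedField 𝕜] [SeminormedAddCommGroup X] [NormedSpace 𝕜 X]
    [SeminormedAddCommGroup Y] [NormedSpace 𝕜 Y] [SeminormedAddCommGroup Z] [NormedSpace 𝕜 Z]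
    (T : X × Y →L[𝕜] Z) : ‖T‖ ≤ ‖T ∘L inl 𝕜 X Y‖ + ‖T ∘L inr 𝕜 X Y‖ := by
  conv_lhs => rw [← coprod_comp_inl_inr T, ← comp_fst_add_comp_snd]
  exact (norm_add_le _ _).trans (add_le_add
    ((opNorm_comp_le _ _).trans (mul_le_of_le_one_right (norm_nonneg _) (norm_fst_le ..)))
    ((opNorm_comp_le _ _).trans (mul_le_of_le_one_right (norm_nonneg _) (norm_snd_le ..))))

end ContinuousLinearMap

open ContinuousLinearMap in
theorem norm_sub_sub_le_of_norm_fderiv_sub_le {E E' W Z : Type*}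
    [NormedAddCommGroup E] [NormedSpace ℝ E] [NormedAddCommGroup E'] [NormedSpace ℝ E']
    [NormedAddCommGroup W] [NormedSpace ℝ W] [NormedAddCommGroup Z] [NormedSpace ℝ Z]
    {f : E → E'} (hf : Differentiable ℝ f) {A : E →L[ℝ] E'} {ε η c : ℝ}
    (hfA : ∀ x, ‖x‖ ≤ ε → ‖fderiv ℝ f x - A‖ ≤ η)
    {ι : W →L[ℝ] E} (hι : ‖ι‖ ≤ 1) {P : E' →L[ℝ] Z} (hP : ‖P‖ ≤ 1) {M : W →L[ℝ] Z}
    (hA : ‖P ∘L A ∘L ι - M‖ ≤ c) {a b : W} (ha : ‖a‖ ≤ ε) (hb : ‖b‖ ≤ ε) :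
    ‖(P (f (ι a)) - M a) - (P (f (ι b)) - M b)‖ ≤ (c + η) * ‖a - b‖ := by
  have hderiv (w : W) : HasFDerivAt (fun w => P (f (ι w)) - M w)
      (P ∘L fderiv ℝ f (ι w) ∘L ι - M) w :=
    (P.hasFDerivAt.comp w ((hf _).hasFDerivAt.comp w ι.hasFDerivAt)).sub M.hasFDerivAt
  have hbound (w : W) (hw : ‖w‖ ≤ ε) : ‖P ∘L fderiv ℝ f (ι w) ∘L ι - M‖ ≤ c + η := by
    have hfA' := hfA (ι w) ((le_of_opNorm_le ι hι w).trans (by simpa using hw))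
    calc ‖P ∘L fderiv ℝ f (ι w) ∘L ι - M‖
        = ‖(P ∘L A ∘L ι - M) + P ∘L (fderiv ℝ f (ι w) - A) ∘L ι‖ := by
          simp only [comp_sub, sub_comp]; abel_nf
      _ ≤ c + ‖P‖ * (‖fderiv ℝ f (ι w) - A‖ * ‖ι‖) := norm_add_le_of_le hA
          ((opNorm_comp_le _ _).trans (mul_le_mul_of_nonneg_left (opNorm_comp_le _ _)
            (norm_nonneg _)))
      _ ≤ c + η := by
          gcongr
          calc ‖P‖ * (‖fderiv ℝ f (ι w) - A‖ * ‖ι‖) ≤ 1 * (‖fderiv ℝ f (ι w) - A‖ * 1) := by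
                gcongr
            _ ≤ η := by simpa using hfA'
  simpa using (convex_closedBall (0 : W) ε).norm_image_sub_le_of_norm_hasFDerivWithin_le
    (fun w _ => (hderiv w).hasFDerivWithinAt) (fun w hw => hbound w (mem_closedBall_zero_iff.1 hw))
    (mem_closedBall_zero_iff.2 hb) (mem_closedBall_zero_iff.2 ha)

theorem Prod.mk_zero_eq_zero_mk_add_iff {W X : Type*} [AddCommGroup W] [AddCommGroup X]
    {w : W} {x : X} {z : W × X} : ((w, 0) : W × X) = (0, x) + z ↔ w = z.1 ∧ x = -z.2 := by
  rw [Prod.ext_iff, eq_neg_iff_add_eq_zero, eq_comm (a := (0 : X))]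
  simp

theorem existsUnique_shadowing_of_lipschitz_rows {Xs Xu Xc : Type*}
    [NormedAddCommGroup Xs] [CompleteSpace Xs]
    [NormedAddCommGroup Xu] [NormedSpace ℝ Xu] [CompleteSpace Xu] [NormedAddCommGroup Xc]
    (F : ℤ → (Xs × Xu) × Xc → (Xs × Xu) × Xc) (B : ℤ → Xu ≃L[ℝ] Xu) {lam C δ ε : ℝ}
    (hlam0 : 0 ≤ lam) (hlam1 : lam < 1) (hC : 0 ≤ C) (hε : 0 ≤ ε)
    (hC4 : 4 * C ≤ 1 - lam) (hδ4 : 4 * δ ≤ ε * (1 - lam))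
    (hB : ∀ k, ‖((B k).symm : Xu →L[ℝ] Xu)‖ ≤ lam)
    (hs : ∀ k a b, ‖a‖ ≤ ε → ‖b‖ ≤ ε →
      ‖(F k (a, 0)).1.1 - (F k (b, 0)).1.1‖ ≤ (lam + C) * ‖a - b‖)
    (hu : ∀ k a b, ‖a‖ ≤ ε → ‖b‖ ≤ ε →
      ‖((F k (a, 0)).1.2 - B k a.2) - ((F k (b, 0)).1.2 - B k b.2)‖ ≤ C * ‖a - b‖)
    (hc : ∀ k a b, ‖a‖ ≤ ε → ‖b‖ ≤ ε → ‖(F k (a, 0)).2 - (F k (b, 0)).2‖ ≤ C * ‖a - b‖)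
    (hF0 : ∀ k, ‖F k 0‖ ≤ δ) :
    ∃! p : (ℤ → Xc) × (ℤ → Xs × Xu), (∀ k, ‖p.1 k‖ + ‖p.2 k‖ ≤ ε) ∧
      ∀ k, ((p.2 (k + 1), 0) : (Xs × Xu) × Xc) = (0, p.1 (k + 1)) + F k (p.2 k, 0) := by
  have hlamC : lam + C < 1 := by linarith
  have hδ (r : ℝ) (hr : ε / 2 ≤ r) : δ ≤ (1 - (lam + C)) * r := by
    nlinarith [mul_nonneg (sub_nonneg.2 hC4) (hr.trans' (by positivity) : 0 ≤ r),
      mul_nonneg (sub_nonneg.2 hlam1.le) (sub_nonneg.2 hr)]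
  have horbit (r : ℝ) (hr : ε / 2 ≤ r) (hrε : r ≤ ε) :=
    existsUnique_bounded_orbit (gs := fun k w => (F k (w, 0)).1.1)
      (h := fun k w => (F k (w, 0)).1.2 - B k w.2) hlam0 hC hlamC (by linarith) (hδ r hr) hB
      (fun k a b ha hb => hs k a b (ha.trans hrε) (hb.trans hrε))
      (fun k a b ha hb => hu k a b (ha.trans hrε) (hb.trans hrε))
      (fun k => (norm_fst_le _).trans ((norm_fst_le _).trans (hF0 k)))
      (fun k => by
        simpa [Prod.mk_zero_zero] using (norm_snd_le _).trans ((norm_fst_le _).trans (hF0 k)))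
  simp only [add_sub_cancel, Prod.mk.eta] at horbit
  obtain ⟨v, ⟨hv, hvF⟩, -⟩ := horbit (ε / 2) le_rfl (by linarith)
  have hvε (k : ℤ) : ‖v k‖ ≤ ε := (hv k).trans (by linarith)
  have hcenter (k : ℤ) : ‖(F k (v k, 0)).2‖ ≤ δ + C * (ε / 2) := by
    have h0 := hc k (v k) 0 (hvε k) (by simpa using hε)
    rw [Prod.mk_zero_zero, sub_zero] at h0
    calc ‖(F k (v k, 0)).2‖ ≤ ‖(F k 0).2‖ + ‖(F k (v k, 0)).2 - (F k 0).2‖ :=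
          norm_le_norm_add_norm_sub' _ _
      _ ≤ δ + C * (ε / 2) :=
          add_le_add ((norm_snd_le _).trans (hF0 k)) (h0.trans (by gcongr; exact hv k))
  refine ⟨(fun k => -(F (k - 1) (v (k - 1), 0)).2, v), ⟨fun k => ?_, fun k => ?_⟩, ?_⟩
  · calc ‖-(F (k - 1) (v (k - 1), 0)).2‖ + ‖v k‖ ≤ (δ + C * (ε / 2)) + ε / 2 := by
          rw [norm_neg]; exact add_le_add (hcenter _) (hv k)
      _ ≤ ε := by nlinarith
  · simpa [Prod.mk_zero_eq_zero_mk_add_iff] using hvF k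
  · rintro ⟨u', v'⟩ ⟨hbound, heq⟩
    simp only [Prod.mk_zero_eq_zero_mk_add_iff, forall_and] at heq
    obtain rfl : v' = v := (horbit ε (by linarith) le_rfl).unique
      ⟨fun k => (le_add_of_nonneg_left (norm_nonneg _)).trans (hbound k), heq.1⟩ ⟨hvε, hvF⟩
    refine Prod.ext (funext fun k => ?_) rfl
    simpa using heq.2 (k - 1)

theorem existsUnique_shadowing_of_norm_fderiv_sub_le {Xs Xu Xc : Type*}
    [NormedAddCommGroup Xs] [NormedSpace ℝ Xs] [CompleteSpace Xs]
    [NormedAddCommGroup Xu] [NormedSpace ℝ Xu] [CompleteSpace Xu]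
    [NormedAddCommGroup Xc] [NormedSpace ℝ Xc]
    (F : ℤ → (Xs × Xu) × Xc → (Xs × Xu) × Xc) (hF : ∀ k, Differentiable ℝ (F k))
    (A : ℤ → ((Xs × Xu) × Xc) →L[ℝ] ((Xs × Xu) × Xc)) (B : ℤ → Xu ≃L[ℝ] Xu) {lam C δ ε : ℝ}
    (hlam0 : 0 ≤ lam) (hlam1 : lam < 1) (hC : 0 ≤ C) (hε : 0 ≤ ε)
    (hC4 : 4 * C ≤ 1 - lam) (hδ4 : 4 * δ ≤ ε * (1 - lam))
    (hB : ∀ k, ‖((B k).symm : Xu →L[ℝ] Xu)‖ ≤ lam)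
    (hAs : ∀ k, ‖(ContinuousLinearMap.fst ℝ Xs Xu ∘L .fst ℝ (Xs × Xu) Xc) ∘L
      A k ∘L .inl ℝ (Xs × Xu) Xc‖ ≤ lam + C / 2)
    (hAu : ∀ k, ‖(ContinuousLinearMap.snd ℝ Xs Xu ∘L .fst ℝ (Xs × Xu) Xc) ∘L
      A k ∘L .inl ℝ (Xs × Xu) Xc - (B k : Xu →L[ℝ] Xu) ∘L .snd ℝ Xs Xu‖ ≤ C / 2)
    (hAc : ∀ k, ‖ContinuousLinearMap.snd ℝ (Xs × Xu) Xc ∘L A k ∘L .inl ℝ (Xs × Xu) Xc‖ ≤ C / 2)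
    (hDF : ∀ k x, ‖x‖ ≤ ε → ‖fderiv ℝ (F k) x - A k‖ ≤ C / 2)
    (hF0 : ∀ k, ‖F k 0‖ ≤ δ) :
    ∃! p : (ℤ → Xc) × (ℤ → Xs × Xu), (∀ k, ‖p.1 k‖ + ‖p.2 k‖ ≤ ε) ∧
      ∀ k, ((p.2 (k + 1), 0) : (Xs × Xu) × Xc) = (0, p.1 (k + 1)) + F k (p.2 k, 0) := by
  have hinl := ContinuousLinearMap.norm_inl_le_one ℝ (Xs × Xu) Xc
  refine existsUnique_shadowing_of_lipschitz_rows F B hlam0 hlam1 hC hε hC4 hδ4 hB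
    (fun k a b ha hb => ?_) (fun k a b ha hb => ?_) (fun k a b ha hb => ?_) hF0
  · have hP := (ContinuousLinearMap.opNorm_comp_le _ _).trans (mul_le_one₀
      (ContinuousLinearMap.norm_fst_le ℝ Xs Xu) (norm_nonneg _)
      (ContinuousLinearMap.norm_fst_le ℝ (Xs × Xu) Xc))
    simpa [add_assoc, add_halves] using norm_sub_sub_le_of_norm_fderiv_sub_le (hF k) (hDF k) hinl hP
      (M := 0) (c := lam + C / 2) (by simpa using hAs k) ha hb
  · have hP := (ContinuousLinearMap.opNorm_comp_le _ _).trans (mul_le_one₀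
      (ContinuousLinearMap.norm_snd_le ℝ Xs Xu) (norm_nonneg _)
      (ContinuousLinearMap.norm_fst_le ℝ (Xs × Xu) Xc))
    simpa using norm_sub_sub_le_of_norm_fderiv_sub_le (hF k) (hDF k) hinl hP (hAu k) ha hb
  · simpa [add_halves] using norm_sub_sub_le_of_norm_fderiv_sub_le (hF k) (hDF k) hinl
      (ContinuousLinearMap.norm_snd_le ..) (M := 0) (c := C / 2) (by simpa using hAc k) ha hb

theorem stmt_7_general
    {Xs Xu Xc : Type*}
    [NormedAddCommGroup Xs] [NormedSpace ℝ Xs] [CompleteSpace Xs]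
    [NormedAddCommGroup Xu] [NormedSpace ℝ Xu] [CompleteSpace Xu]
    [NormedAddCommGroup Xc] [NormedSpace ℝ Xc]
    (lam ε δ C μ : ℝ) (hlam0 : 0 < lam) (hlam1 : lam < 1)
    (hε : 0 < ε) (hC : 0 < C)
    (hC' : 2 * C / (1 - lam) ≤ 1 / 2) (hδ' : 2 * δ / (1 - lam) ≤ ε / 2)
    (πs : ((Xs × Xu) × Xc) →L[ℝ] Xs)
    (hπs : πs = (ContinuousLinearMap.fst ℝ Xs Xu).comp
      (ContinuousLinearMap.fst ℝ (Xs × Xu) Xc))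
    (πu : ((Xs × Xu) × Xc) →L[ℝ] Xu)
    (hπu : πu = (ContinuousLinearMap.snd ℝ Xs Xu).comp
      (ContinuousLinearMap.fst ℝ (Xs × Xu) Xc))
    (πc : ((Xs × Xu) × Xc) →L[ℝ] Xc)
    (hπc : πc = ContinuousLinearMap.snd ℝ (Xs × Xu) Xc)
    (ιs : Xs →L[ℝ] ((Xs × Xu) × Xc))
    (hιs : ιs = (ContinuousLinearMap.inl ℝ (Xs × Xu) Xc).comp
      (ContinuousLinearMap.inl ℝ Xs Xu))
    (ιu : Xu →L[ℝ] ((Xs × Xu) × Xc))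
    (hιu : ιu = (ContinuousLinearMap.inl ℝ (Xs × Xu) Xc).comp
      (ContinuousLinearMap.inr ℝ Xs Xu))
    (ιc : Xc →L[ℝ] ((Xs × Xu) × Xc))
    (hιc : ιc = ContinuousLinearMap.inr ℝ (Xs × Xu) Xc)
    (ιW : (Xs × Xu) →L[ℝ] ((Xs × Xu) × Xc))
    (hιW : ιW = ContinuousLinearMap.inl ℝ (Xs × Xu) Xc)
    (F : ℤ → ((Xs × Xu) × Xc) → ((Xs × Xu) × Xc)) (hF : ∀ k, Differentiable ℝ (F k))
    (A : ℤ → ((Xs × Xu) × Xc) →L[ℝ] ((Xs × Xu) × Xc))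
    (hss : ∀ k, ‖πs.comp ((A k).comp ιs)‖ ≤ lam)
    (huu : ∀ k, ∃ B : Xu ≃L[ℝ] Xu,
      (B : Xu →L[ℝ] Xu) = πu.comp ((A k).comp ιu) ∧
      ‖(B : Xu →L[ℝ] Xu)‖ ≤ μ ∧ ‖(B.symm : Xu →L[ℝ] Xu)‖ ≤ lam)
    (hoff : ∀ k,
      ‖πs.comp ((A k).comp ιu)‖ + ‖πs.comp ((A k).comp ιc)‖ +
      ‖πu.comp ((A k).comp ιs)‖ + ‖πu.comp ((A k).comp ιc)‖ +
      ‖πc.comp ((A k).comp ιs)‖ + ‖πc.comp ((A k).comp ιu)‖ ≤ C / 2)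
    (hDF : ∀ k, ∀ v : (Xs × Xu) × Xc, ‖v‖ ≤ ε → ‖fderiv ℝ (F k) v - A k‖ ≤ C / 2)
    (hF0 : ∀ k, ‖F k 0‖ ≤ δ) :
    ∃! p : (ℤ → Xc) × (ℤ → Xs × Xu),
      (∀ k, ‖p.1 k‖ + ‖p.2 k‖ ≤ ε) ∧
      (∀ k, ιW (p.2 (k + 1)) = ιc (p.1 (k + 1)) + F k (ιW (p.2 k))) := by
  choose B hBA _ hBinv using huu
  have h1lam : 0 < 1 - lam := by linarith
  have hC4 : 4 * C ≤ 1 - lam := by rw [div_le_iff₀ h1lam] at hC'; linarith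
  have hδ4 : 4 * δ ≤ ε * (1 - lam) := by rw [div_le_iff₀ h1lam] at hδ'; linarith
  have hWs : ιW ∘L .inl ℝ Xs Xu = ιs := by rw [hιW, hιs]
  have hWu : ιW ∘L .inr ℝ Xs Xu = ιu := by rw [hιW, hιu]
  have hoff_nonneg (k : ℤ) := And.intro (norm_nonneg (πs ∘L A k ∘L ιu)) <|
    And.intro (norm_nonneg (πs ∘L A k ∘L ιc)) <| And.intro (norm_nonneg (πu ∘L A k ∘L ιs)) <|
    And.intro (norm_nonneg (πu ∘L A k ∘L ιc)) <| And.intro (norm_nonneg (πc ∘L A k ∘L ιs))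
      (norm_nonneg (πc ∘L A k ∘L ιu))
  have hrow_s (k : ℤ) : ‖πs ∘L A k ∘L ιW‖ ≤ lam + C / 2 := by
    refine (ContinuousLinearMap.opNorm_le_comp_inl_add_comp_inr _).trans ?_
    simp only [ContinuousLinearMap.comp_assoc, hWs, hWu]
    linarith [hss k, hoff k, hoff_nonneg k]
  have hrow_u (k : ℤ) :
      ‖πu ∘L A k ∘L ιW - (B k : Xu →L[ℝ] Xu) ∘L .snd ℝ Xs Xu‖ ≤ C / 2 := by
    refine (ContinuousLinearMap.opNorm_le_comp_inl_add_comp_inr _).trans ?_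
    simp only [ContinuousLinearMap.sub_comp, ContinuousLinearMap.comp_assoc, hWs, hWu, hBA,
      ContinuousLinearMap.snd_comp_inl, ContinuousLinearMap.snd_comp_inr,
      ContinuousLinearMap.comp_zero, ContinuousLinearMap.comp_id, sub_zero, sub_self, norm_zero,
      add_zero]
    linarith [hoff k, hoff_nonneg k]
  have hrow_c (k : ℤ) : ‖πc ∘L A k ∘L ιW‖ ≤ C / 2 := by
    refine (ContinuousLinearMap.opNorm_le_comp_inl_add_comp_inr _).trans ?_
    simp only [ContinuousLinearMap.comp_assoc, hWs, hWu]
    linarith [hoff k, hoff_nonneg k]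
  subst hπs hπu hπc hιc hιW
  exact existsUnique_shadowing_of_norm_fderiv_sub_le F hF A B hlam0.le hlam1 hC.le hε.le hC4 hδ4
    hBinv hrow_s hrow_u hrow_c hDF hF0

theorem stmt_7
    {Xs Xu Xc : Type*}
    [NormedAddCommGroup Xs] [NormedSpace ℝ Xs] [CompleteSpace Xs]
    [NormedAddCommGroup Xu] [NormedSpace ℝ Xu] [CompleteSpace Xu]
    [NormedAddCommGroup Xc] [NormedSpace ℝ Xc] [CompleteSpace Xc]
    (lam ε δ C μ : ℝ) (hlam0 : 0 < lam) (hlam1 : lam < 1)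
    (hε : 0 < ε) (hδ : 0 < δ) (hC : 0 < C) (hμ : 0 < μ)
    (hC' : 2 * C / (1 - lam) ≤ 1 / 2) (hδ' : 2 * δ / (1 - lam) ≤ ε / 2)
    (πs : ((Xs × Xu) × Xc) →L[ℝ] Xs)
    (hπs : πs = (ContinuousLinearMap.fst ℝ Xs Xu).comp
      (ContinuousLinearMap.fst ℝ (Xs × Xu) Xc))
    (πu : ((Xs × Xu) × Xc) →L[ℝ] Xu)
    (hπu : πu = (ContinuousLinearMap.snd ℝ Xs Xu).comp
      (ContinuousLinearMap.fst ℝ (Xs × Xu) Xc))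
    (πc : ((Xs × Xu) × Xc) →L[ℝ] Xc)
    (hπc : πc = ContinuousLinearMap.snd ℝ (Xs × Xu) Xc)
    (ιs : Xs →L[ℝ] ((Xs × Xu) × Xc))
    (hιs : ιs = (ContinuousLinearMap.inl ℝ (Xs × Xu) Xc).comp
      (ContinuousLinearMap.inl ℝ Xs Xu))
    (ιu : Xu →L[ℝ] ((Xs × Xu) × Xc))
    (hιu : ιu = (ContinuousLinearMap.inl ℝ (Xs × Xu) Xc).comp
      (ContinuousLinearMap.inr ℝ Xs Xu))
    (ιc : Xc →L[ℝ] ((Xs × Xu) × Xc))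
    (hιc : ιc = ContinuousLinearMap.inr ℝ (Xs × Xu) Xc)
    (ιW : (Xs × Xu) →L[ℝ] ((Xs × Xu) × Xc))
    (hιW : ιW = ContinuousLinearMap.inl ℝ (Xs × Xu) Xc)
    (F : ℤ → ((Xs × Xu) × Xc) → ((Xs × Xu) × Xc)) (hF : ∀ k, Differentiable ℝ (F k))
    (A : ℤ → ((Xs × Xu) × Xc) →L[ℝ] ((Xs × Xu) × Xc)) (hA : ∀ k, A k = fderiv ℝ (F k) 0)
    (hss : ∀ k, ‖πs.comp ((A k).comp ιs)‖ ≤ lam)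
    (huu : ∀ k, ∃ B : Xu ≃L[ℝ] Xu,
      (B : Xu →L[ℝ] Xu) = πu.comp ((A k).comp ιu) ∧
      ‖(B : Xu →L[ℝ] Xu)‖ ≤ μ ∧ ‖(B.symm : Xu →L[ℝ] Xu)‖ ≤ lam)
    (hoff : ∀ k,
      ‖πs.comp ((A k).comp ιu)‖ + ‖πs.comp ((A k).comp ιc)‖ +
      ‖πu.comp ((A k).comp ιs)‖ + ‖πu.comp ((A k).comp ιc)‖ +
      ‖πc.comp ((A k).comp ιs)‖ + ‖πc.comp ((A k).comp ιu)‖ ≤ C / 2)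
    (hDF : ∀ k, ∀ v : (Xs × Xu) × Xc, ‖v‖ ≤ ε → ‖fderiv ℝ (F k) v - A k‖ ≤ C / 2)
    (hF0 : ∀ k, ‖F k 0‖ ≤ δ) :
    ∃! p : (ℤ → Xc) × (ℤ → Xs × Xu),
      (∀ k, ‖p.1 k‖ + ‖p.2 k‖ ≤ ε) ∧
      (∀ k, ιW (p.2 (k + 1)) = ιc (p.1 (k + 1)) + F k (ιW (p.2 k))) :=
  stmt_7_general lam ε δ C μ hlam0 hlam1 hε hC hC' hδ' πs hπs πu hπu πc hπc ιs hιs ιu hιu ιc hιc ιW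
    hιW F hF A hss huu hoff hDF hF0
end

section
/- Let Xs and Xu be real Banach spaces and E = Xs × Xu with the sup norm; let π_s, π_u be the projections and ι_s, ι_u the canonical inclusions. Let λ ∈ (0,1) and ε, δ, C, μ > 0 satisfy C/(1−λ) ≤ 1/2 and δ/(1−λ) ≤ ε/2. For each k ∈ ℤ let G_k : E → E be a differentiable map with A_k = DG_k(0) satisfying: (i) ‖π_s ∘ A_k ∘ ι_s‖ ≤ λ; (ii) there is a continuous linear equivalence B_k : Xu → Xu whose underlying map equals π_u ∘ A_k ∘ ι_u, with ‖B_k‖ ≤ μ and ‖B_k⁻¹‖ ≤ λ; (iii) ‖π_s ∘ A_k ∘ ι_u‖ ≤ C/2 and ‖π_u ∘ A_k ∘ ι_s‖ ≤ C/2; (iv) ‖DG_k(v) − A_k‖ ≤ C/2 for every v with ‖v‖ ≤ ε; (v) ‖G_k(0)‖ ≤ δ. Assume moreover that there is n ≥ 1 such that G_{k+n} = G_k for all k ∈ ℤ. Then the unique sequence (v_k)_{k∈ℤ} with ‖v_k‖ ≤ ε for all k and v_{k+1} = G_k(v_k) for all k is n-periodic: v_{k+n} = v_k for all k ∈ ℤ.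 -/
/-!
Two bounded orbits `v`, `w` of the sequence of maps `G k` have a bounded difference `d = w - v`,
and by the mean value inequality `d (k + 1)` is `A k (d k)` up to an error `(C / 2) ‖d k‖`. The
block estimates then bound the stable part of `d (k + 1)` and, through `B k⁻¹`, the unstable part
of `d k` by `(λ + C) M`, where `M` is the supremum of `‖d k‖`. Since `λ + C < 1`, `M = 0`.
Applied to `w k = v (k + n)`, which is again a bounded orbit when `G` is `n`-periodic, this
uniqueness gives periodicity.
-/

open ContinuousLinearMap (fst snd inl inr le_of_opNorm_le le_of_opNorm_le_of_le)
open Set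

theorem eq_zero_of_bddAbove_of_forall_bound_le_mul {ι E : Type*} [NormedAddCommGroup E]
    {d : ι → E} {q : ℝ} (hq : q < 1) (hd : BddAbove (range fun k => ‖d k‖))
    (h : ∀ M, (∀ k, ‖d k‖ ≤ M) → ∀ k, ‖d k‖ ≤ q * M) : d = 0 := by
  funext k
  have : Nonempty ι := ⟨k⟩
  set M := ⨆ j, ‖d j‖
  have hle : ∀ j, ‖d j‖ ≤ M := le_ciSup hd
  have hMq : M ≤ q * M := ciSup_le (h M hle)
  have hM : M ≤ 0 := by nlinarith [(norm_nonneg _).trans (hle k)]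
  exact norm_le_zero_iff.mp ((hle k).trans hM)

def IsBoundedOrbit {E : Type*} [Norm E] (G : ℤ → E → E) (ε : ℝ) (v : ℤ → E) : Prop :=
  (∀ k, ‖v k‖ ≤ ε) ∧ ∀ k, v (k + 1) = G k (v k)

theorem IsBoundedOrbit.comp_add_right {E : Type*} [Norm E] {G : ℤ → E → E} {ε : ℝ} {v : ℤ → E}
    (hv : IsBoundedOrbit G ε v) {n : ℤ} (hper : ∀ k, G (k + n) = G k) :
    IsBoundedOrbit G ε fun k => v (k + n) := by
  refine ⟨fun k => hv.1 (k + n), fun k => ?_⟩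
  dsimp only
  rw [add_right_comm, hv.2, hper]

section Blocks

variable {Xs Xu : Type*} [NormedAddCommGroup Xs] [NormedSpace ℝ Xs]
  [NormedAddCommGroup Xu] [NormedSpace ℝ Xu]
  {A : Xs × Xu →L[ℝ] Xs × Xu} {lam c : ℝ} {x y : Xs × Xu}

theorem norm_fst_le_of_norm_sub_apply_le
    (hss : ‖(fst ℝ Xs Xu).comp (A.comp (inl ℝ Xs Xu))‖ ≤ lam)
    (hsu : ‖(fst ℝ Xs Xu).comp (A.comp (inr ℝ Xs Xu))‖ ≤ c)
    (hy : ‖y - A x‖ ≤ c * ‖x‖) :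
    ‖y.1‖ ≤ (lam + 2 * c) * ‖x‖ := by
  have hlam : 0 ≤ lam := (norm_nonneg _).trans hss
  have hc : 0 ≤ c := (norm_nonneg _).trans hsu
  have hdecomp : y.1 = (fst ℝ Xs Xu).comp (A.comp (inl ℝ Xs Xu)) x.1
      + (fst ℝ Xs Xu).comp (A.comp (inr ℝ Xs Xu)) x.2 + (y - A x).1 := by
    simp [← A.comp_inl_add_comp_inr x]
  calc ‖y.1‖
      ≤ lam * ‖x.1‖ + c * ‖x.2‖ + c * ‖x‖ := by
        rw [hdecomp]
        refine (norm_add₃_le).trans (add_le_add_three ?_ ?_ ((norm_fst_le _).trans hy))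
        · exact le_of_opNorm_le _ hss _
        · exact le_of_opNorm_le _ hsu _
    _ ≤ lam * ‖x‖ + c * ‖x‖ + c * ‖x‖ := by
        gcongr
        · exact norm_fst_le x
        · exact norm_snd_le x
    _ = (lam + 2 * c) * ‖x‖ := by ring

theorem norm_snd_le_of_norm_sub_apply_le {B : Xu ≃L[ℝ] Xu}
    (hB : (B : Xu →L[ℝ] Xu) = (snd ℝ Xs Xu).comp (A.comp (inr ℝ Xs Xu)))
    (hBsymm : ‖(B.symm : Xu →L[ℝ] Xu)‖ ≤ lam)
    (hus : ‖(snd ℝ Xs Xu).comp (A.comp (inl ℝ Xs Xu))‖ ≤ c)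
    (hy : ‖y - A x‖ ≤ c * ‖x‖) :
    ‖x.2‖ ≤ lam * (‖y.2‖ + 2 * c * ‖x‖) := by
  have hlam : 0 ≤ lam := (norm_nonneg _).trans hBsymm
  have hdecomp : B x.2 = y.2 - (snd ℝ Xs Xu).comp (A.comp (inl ℝ Xs Xu)) x.1 - (y - A x).2 := by
    rw [← ContinuousLinearEquiv.coe_coe, hB]
    simp [← A.comp_inl_add_comp_inr x]
  have hBx : ‖B x.2‖ ≤ ‖y.2‖ + 2 * c * ‖x‖ := by
    rw [hdecomp]
    calc _ ≤ ‖y.2‖ + ‖(snd ℝ Xs Xu).comp (A.comp (inl ℝ Xs Xu)) x.1‖ + ‖(y - A x).2‖ :=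
          (norm_sub_le _ _).trans (by gcongr; exact norm_sub_le _ _)
      _ ≤ ‖y.2‖ + c * ‖x‖ + c * ‖x‖ := by
          gcongr
          · exact le_of_opNorm_le_of_le _ hus (norm_fst_le x)
          · exact (norm_snd_le _).trans hy
      _ = ‖y.2‖ + 2 * c * ‖x‖ := by ring
  calc ‖x.2‖ = ‖(B.symm : Xu →L[ℝ] Xu) (B x.2)‖ := by simp
    _ ≤ lam * (‖y.2‖ + 2 * c * ‖x‖) := le_of_opNorm_le_of_le _ hBsymm hBx

end Blocks

section Orbits

variable {Xs Xu : Type*} [NormedAddCommGroup Xs] [NormedSpace ℝ Xs]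
  [NormedAddCommGroup Xu] [NormedSpace ℝ Xu]
  {A : ℤ → Xs × Xu →L[ℝ] Xs × Xu} {lam c : ℝ}

theorem forall_norm_le_mul_of_forall_norm_le {d : ℤ → Xs × Xu}
    (hss : ∀ k, ‖(fst ℝ Xs Xu).comp ((A k).comp (inl ℝ Xs Xu))‖ ≤ lam)
    (huu : ∀ k, ∃ B : Xu ≃L[ℝ] Xu,
      (B : Xu →L[ℝ] Xu) = (snd ℝ Xs Xu).comp ((A k).comp (inr ℝ Xs Xu)) ∧
      ‖(B.symm : Xu →L[ℝ] Xu)‖ ≤ lam)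
    (hsu : ∀ k, ‖(fst ℝ Xs Xu).comp ((A k).comp (inr ℝ Xs Xu))‖ ≤ c)
    (hus : ∀ k, ‖(snd ℝ Xs Xu).comp ((A k).comp (inl ℝ Xs Xu))‖ ≤ c)
    (hlam : lam ≤ 1) (hd : ∀ k, ‖d (k + 1) - A k (d k)‖ ≤ c * ‖d k‖)
    {M : ℝ} (hM : ∀ k, ‖d k‖ ≤ M) (k : ℤ) :
    ‖d k‖ ≤ (lam + 2 * c) * M := by
  obtain ⟨B, hB, hBsymm⟩ := huu k
  have hlam0 : 0 ≤ lam := (norm_nonneg _).trans (hss k)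
  have hc : 0 ≤ c := (norm_nonneg _).trans (hsu k)
  have hM0 : 0 ≤ M := (norm_nonneg _).trans (hM k)
  refine norm_prod_le_iff.mpr ⟨?stable, ?unstable⟩
  case stable =>
    have h := norm_fst_le_of_norm_sub_apply_le (hss (k - 1)) (hsu (k - 1)) (hd (k - 1))
    rw [sub_add_cancel] at h
    exact h.trans (mul_le_mul_of_nonneg_left (hM _) (by positivity))
  case unstable =>
    calc ‖(d k).2‖ ≤ lam * (‖(d (k + 1)).2‖ + 2 * c * ‖d k‖) :=
          norm_snd_le_of_norm_sub_apply_le hB hBsymm (hus k) (hd k)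
      _ ≤ lam * (M + 2 * c * M) := by
          gcongr
          · exact (norm_snd_le _).trans (hM _)
          · exact hM k
      _ ≤ (lam + 2 * c) * M := by nlinarith [mul_nonneg hc hM0]

theorem IsBoundedOrbit.eq {G : ℤ → Xs × Xu → Xs × Xu} {ε : ℝ} {v w : ℤ → Xs × Xu}
    (hG : ∀ k, Differentiable ℝ (G k))
    (hss : ∀ k, ‖(fst ℝ Xs Xu).comp ((A k).comp (inl ℝ Xs Xu))‖ ≤ lam)
    (huu : ∀ k, ∃ B : Xu ≃L[ℝ] Xu,
      (B : Xu →L[ℝ] Xu) = (snd ℝ Xs Xu).comp ((A k).comp (inr ℝ Xs Xu)) ∧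
      ‖(B.symm : Xu →L[ℝ] Xu)‖ ≤ lam)
    (hsu : ∀ k, ‖(fst ℝ Xs Xu).comp ((A k).comp (inr ℝ Xs Xu))‖ ≤ c)
    (hus : ∀ k, ‖(snd ℝ Xs Xu).comp ((A k).comp (inl ℝ Xs Xu))‖ ≤ c)
    (hDG : ∀ k, ∀ x : Xs × Xu, ‖x‖ ≤ ε → ‖fderiv ℝ (G k) x - A k‖ ≤ c)
    (hq : lam + 2 * c < 1) (hv : IsBoundedOrbit G ε v) (hw : IsBoundedOrbit G ε w) : v = w := by
  have hlam : lam ≤ 1 := by linarith [(norm_nonneg _).trans (hsu 0)]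
  have hdiff : ∀ k, ‖(w - v) (k + 1) - A k ((w - v) k)‖ ≤ c * ‖(w - v) k‖ := fun k => by
    simpa [hv.2, hw.2] using (convex_closedBall (0 : Xs × Xu) ε).norm_image_sub_le_of_norm_fderiv_le'
      (fun x _ => (hG k).differentiableAt) (fun x hx => hDG k x (mem_closedBall_zero_iff.mp hx))
      (mem_closedBall_zero_iff.mpr (hv.1 k)) (mem_closedBall_zero_iff.mpr (hw.1 k))
  have hbdd : BddAbove (range fun k => ‖(w - v) k‖) := by
    refine ⟨ε + ε, forall_mem_range.mpr fun k => ?_⟩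
    exact (norm_sub_le _ _).trans (add_le_add (hw.1 k) (hv.1 k))
  have hzero := eq_zero_of_bddAbove_of_forall_bound_le_mul hq hbdd fun _ hM =>
    forall_norm_le_mul_of_forall_norm_le hss huu hsu hus hlam hdiff hM
  exact (sub_eq_zero.mp hzero).symm

end Orbits

theorem stmt_8_general
    {Xs Xu : Type*}
    [NormedAddCommGroup Xs] [NormedSpace ℝ Xs]
    [NormedAddCommGroup Xu] [NormedSpace ℝ Xu]
    (lam ε C μ : ℝ) (hlam1 : lam < 1)
    (hC' : C / (1 - lam) ≤ 1 / 2)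
    (G : ℤ → (Xs × Xu) → (Xs × Xu)) (hG : ∀ k, Differentiable ℝ (G k))
    (A : ℤ → (Xs × Xu) →L[ℝ] (Xs × Xu))
    (hss : ∀ k, ‖(ContinuousLinearMap.fst ℝ Xs Xu).comp
      ((A k).comp (ContinuousLinearMap.inl ℝ Xs Xu))‖ ≤ lam)
    (huu : ∀ k, ∃ B : Xu ≃L[ℝ] Xu,
      (B : Xu →L[ℝ] Xu) = (ContinuousLinearMap.snd ℝ Xs Xu).comp
        ((A k).comp (ContinuousLinearMap.inr ℝ Xs Xu)) ∧
      ‖(B : Xu →L[ℝ] Xu)‖ ≤ μ ∧ ‖(B.symm : Xu →L[ℝ] Xu)‖ ≤ lam)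
    (hsu : ∀ k, ‖(ContinuousLinearMap.fst ℝ Xs Xu).comp
      ((A k).comp (ContinuousLinearMap.inr ℝ Xs Xu))‖ ≤ C / 2)
    (hus : ∀ k, ‖(ContinuousLinearMap.snd ℝ Xs Xu).comp
      ((A k).comp (ContinuousLinearMap.inl ℝ Xs Xu))‖ ≤ C / 2)
    (hDG : ∀ k, ∀ v : Xs × Xu, ‖v‖ ≤ ε → ‖fderiv ℝ (G k) v - A k‖ ≤ C / 2)
    (n : ℕ) (hper : ∀ k : ℤ, G (k + n) = G k)
    (v : ℤ → Xs × Xu) (hv1 : ∀ k, ‖v k‖ ≤ ε) (hv2 : ∀ k, v (k + 1) = G k (v k)) :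
    ∀ k : ℤ, v (k + n) = v k := by
  have hv : IsBoundedOrbit G ε v := ⟨hv1, hv2⟩
  have hq : lam + 2 * (C / 2) < 1 := by
    rw [div_le_div_iff₀ (sub_pos.mpr hlam1) two_pos] at hC'
    linarith
  have huu' : ∀ k, ∃ B : Xu ≃L[ℝ] Xu,
      (B : Xu →L[ℝ] Xu) = (snd ℝ Xs Xu).comp ((A k).comp (inr ℝ Xs Xu)) ∧
      ‖(B.symm : Xu →L[ℝ] Xu)‖ ≤ lam :=
    fun k => (huu k).imp fun _ hB => ⟨hB.1, hB.2.2⟩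
  intro k
  exact congrFun ((hv.comp_add_right hper).eq hG hss huu' hsu hus hDG hq hv) k

theorem stmt_8
    {Xs Xu : Type*}
    [NormedAddCommGroup Xs] [NormedSpace ℝ Xs] [CompleteSpace Xs]
    [NormedAddCommGroup Xu] [NormedSpace ℝ Xu] [CompleteSpace Xu]
    (lam ε δ C μ : ℝ) (hlam0 : 0 < lam) (hlam1 : lam < 1)
    (hε : 0 < ε) (hδ : 0 < δ) (hC : 0 < C) (hμ : 0 < μ)
    (hC' : C / (1 - lam) ≤ 1 / 2) (hδ' : δ / (1 - lam) ≤ ε / 2)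
    (G : ℤ → (Xs × Xu) → (Xs × Xu)) (hG : ∀ k, Differentiable ℝ (G k))
    (A : ℤ → (Xs × Xu) →L[ℝ] (Xs × Xu)) (hA : ∀ k, A k = fderiv ℝ (G k) 0)
    (hss : ∀ k, ‖(ContinuousLinearMap.fst ℝ Xs Xu).comp
      ((A k).comp (ContinuousLinearMap.inl ℝ Xs Xu))‖ ≤ lam)
    (huu : ∀ k, ∃ B : Xu ≃L[ℝ] Xu,
      (B : Xu →L[ℝ] Xu) = (ContinuousLinearMap.snd ℝ Xs Xu).comp
        ((A k).comp (ContinuousLinearMap.inr ℝ Xs Xu)) ∧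
      ‖(B : Xu →L[ℝ] Xu)‖ ≤ μ ∧ ‖(B.symm : Xu →L[ℝ] Xu)‖ ≤ lam)
    (hsu : ∀ k, ‖(ContinuousLinearMap.fst ℝ Xs Xu).comp
      ((A k).comp (ContinuousLinearMap.inr ℝ Xs Xu))‖ ≤ C / 2)
    (hus : ∀ k, ‖(ContinuousLinearMap.snd ℝ Xs Xu).comp
      ((A k).comp (ContinuousLinearMap.inl ℝ Xs Xu))‖ ≤ C / 2)
    (hDG : ∀ k, ∀ v : Xs × Xu, ‖v‖ ≤ ε → ‖fderiv ℝ (G k) v - A k‖ ≤ C / 2)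
    (hG0 : ∀ k, ‖G k 0‖ ≤ δ)
    (n : ℕ) (hn : 1 ≤ n) (hper : ∀ k : ℤ, G (k + n) = G k)
    (v : ℤ → Xs × Xu) (hv1 : ∀ k, ‖v k‖ ≤ ε) (hv2 : ∀ k, v (k + 1) = G k (v k)) :
    ∀ k : ℤ, v (k + n) = v k :=
  stmt_8_general lam ε C μ hlam1 hC' G hG A hss huu hsu hus hDG n hper v hv1 hv2
end
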